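/- Let c be a positive natural number and z0, z1 : Fin c → ℝ, with P1 = softmax(z1). Define g : ℝ → ℝ by g(s) = D_KL(P1 ‖ softmax(z0 + s·(z1 − z0))). Then g is convex on ℝ, g(s) ≥ 0 for all s, and g(1) = 0; in particular the KL divergence from P1 to the curve point decreases to 0 along the linear-in-logits curve as s → 1. -/
import Mathlib


open Finset

/-- Softmax of a logit vector. -/
noncomputable def softmax {c : ℕ} (z : Fin c → ℝ) : Fin c → ℝ :=
  fun j => Real.exp (z j) / ∑ k, Real.exp (z k)

/-- Kullback–Leibler divergence between two probability vectors on `Fin c`. -/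
noncomputable def KL {c : ℕ} (p q : Fin c → ℝ) : ℝ :=
  ∑ j, p j * Real.log (p j / q j)

lemma sum_exp_pos' {c : ℕ} (hc : 0 < c) (z : Fin c → ℝ) :
    0 < ∑ k, Real.exp (z k) := by
  have : Nonempty (Fin c) := ⟨⟨0, hc⟩⟩
  exact Finset.sum_pos (fun k _ => Real.exp_pos _) Finset.univ_nonempty

lemma softmax_pos' {c : ℕ} (hc : 0 < c) (z : Fin c → ℝ) (j : Fin c) :
    0 < softmax z j :=
  div_pos (Real.exp_pos _) (sum_exp_pos' hc z)

lemma softmax_sum' {c : ℕ} (hc : 0 < c) (z : Fin c → ℝ) :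
    ∑ j, softmax z j = 1 := by
  unfold softmax
  rw [← Finset.sum_div, div_self (sum_exp_pos' hc z).ne']

lemma KL_nonneg' {c : ℕ} (p q : Fin c → ℝ)
    (hp : ∀ j, 0 < p j) (hq : ∀ j, 0 < q j)
    (hps : ∑ j, p j = 1) (hqs : ∑ j, q j = 1) : 0 ≤ KL p q := by
  have key : ∀ j ∈ Finset.univ, p j - q j ≤ p j * Real.log (p j / q j) := by
    intro j _
    have h1 : Real.log (q j / p j) ≤ q j / p j - 1 :=
      Real.log_le_sub_one_of_pos (div_pos (hq j) (hp j))
    have h2 : Real.log (p j / q j) = - Real.log (q j / p j) := by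
      rw [← Real.log_inv, inv_div]
    have h3 : p j * (q j / p j - 1) = q j - p j := by
      rw [mul_sub, mul_div_cancel₀ _ (hp j).ne', mul_one]
    have h4 : p j * Real.log (q j / p j) ≤ q j - p j := by
      rw [← h3]
      exact mul_le_mul_of_nonneg_left h1 (hp j).le
    rw [h2]
    linarith
  have := Finset.sum_le_sum key
  unfold KL
  rw [Finset.sum_sub_distrib, hps, hqs] at this
  linarith

lemma lse_convexOn {c : ℕ} (hc : 0 < c) (a b : Fin c → ℝ) :
    ConvexOn ℝ Set.univ (fun s : ℝ => Real.log (∑ j, Real.exp (a j + s * b j))) := by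
  refine ⟨convex_univ, ?_⟩
  intro x _ y _ p q hp hq hpq
  simp only [smul_eq_mul]
  set A := ∑ j, Real.exp (a j + x * b j) with hA
  set B := ∑ j, Real.exp (a j + y * b j) with hB
  have hApos : 0 < A := sum_exp_pos' hc _
  have hBpos : 0 < B := sum_exp_pos' hc _
  have key : ∑ j, Real.exp (a j + (p * x + q * y) * b j) ≤ A ^ p * B ^ q := by
    have h1 : ∀ j : Fin c, Real.exp (a j + (p * x + q * y) * b j)
        = A ^ p * B ^ q *
          ((Real.exp (a j + x * b j) / A) ^ p * (Real.exp (a j + y * b j) / B) ^ q) := by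
      intro j
      have e1 : (Real.exp (a j + x * b j)) ^ p = Real.exp ((a j + x * b j) * p) := by
        rw [Real.rpow_def_of_pos (Real.exp_pos _), Real.log_exp]
      have e2 : (Real.exp (a j + y * b j)) ^ q = Real.exp ((a j + y * b j) * q) := by
        rw [Real.rpow_def_of_pos (Real.exp_pos _), Real.log_exp]
      rw [Real.div_rpow (Real.exp_pos _).le hApos.le,
          Real.div_rpow (Real.exp_pos _).le hBpos.le, e1, e2]
      have hAne : A ^ p ≠ 0 := (Real.rpow_pos_of_pos hApos p).ne'
      have hBne : B ^ q ≠ 0 := (Real.rpow_pos_of_pos hBpos q).ne'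
      rw [div_mul_div_comm, mul_comm (A ^ p * B ^ q),
        div_mul_cancel₀ _ (mul_ne_zero hAne hBne), ← Real.exp_add]
      congr 1
      linear_combination (-(a j)) * hpq
    calc ∑ j, Real.exp (a j + (p * x + q * y) * b j)
        = A ^ p * B ^ q * ∑ j,
            ((Real.exp (a j + x * b j) / A) ^ p * (Real.exp (a j + y * b j) / B) ^ q) := by
          rw [Finset.mul_sum]; exact Finset.sum_congr rfl fun j _ => h1 j
      _ ≤ A ^ p * B ^ q * ∑ j,
            (p * (Real.exp (a j + x * b j) / A) + q * (Real.exp (a j + y * b j) / B)) := by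
          apply mul_le_mul_of_nonneg_left _
            (mul_nonneg (Real.rpow_pos_of_pos hApos p).le (Real.rpow_pos_of_pos hBpos q).le)
          apply Finset.sum_le_sum
          intro j _
          exact Real.geom_mean_le_arith_mean2_weighted hp hq
            (div_pos (Real.exp_pos _) hApos).le (div_pos (Real.exp_pos _) hBpos).le hpq
      _ = A ^ p * B ^ q := by
          rw [Finset.sum_add_distrib, ← Finset.mul_sum, ← Finset.mul_sum,
            ← Finset.sum_div, ← Finset.sum_div, ← hA, ← hB,
            div_self hApos.ne', div_self hBpos.ne']
          rw [mul_one, mul_one, hpq, mul_one]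
  have hpos : 0 < ∑ j, Real.exp (a j + (p * x + q * y) * b j) := sum_exp_pos' hc _
  calc Real.log (∑ j, Real.exp (a j + (p * x + q * y) * b j))
      ≤ Real.log (A ^ p * B ^ q) := Real.log_le_log hpos key
    _ = p * Real.log A + q * Real.log B := by
        rw [Real.log_mul (Real.rpow_pos_of_pos hApos p).ne' (Real.rpow_pos_of_pos hBpos q).ne',
          Real.log_rpow hApos, Real.log_rpow hBpos]

theorem stmt18 (c : ℕ) (hc : 0 < c) (z0 z1 : Fin c → ℝ)
    (g : ℝ → ℝ)
    (hg : g = fun s =>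
      KL (softmax z1) (softmax (fun j => z0 j + s * (z1 j - z0 j)))) :
    ConvexOn ℝ Set.univ g ∧ (∀ s, 0 ≤ g s) ∧ g 1 = 0 := by
  set P := softmax z1 with hP
  have hPpos : ∀ j, 0 < P j := softmax_pos' hc z1
  have hPsum : ∑ j, P j = 1 := softmax_sum' hc z1
  -- rewrite g
  have hrw : ∀ s : ℝ, g s =
      ((∑ j, P j * Real.log (P j)) - (∑ j, P j * z0 j)) +
        (- (∑ j, P j * (z1 j - z0 j))) * s +
        Real.log (∑ j, Real.exp (z0 j + s * (z1 j - z0 j))) := by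
    intro s
    have hS : 0 < ∑ k, Real.exp (z0 k + s * (z1 k - z0 k)) :=
      sum_exp_pos' hc _
    rw [hg]
    show KL P (softmax (fun j => z0 j + s * (z1 j - z0 j))) = _
    unfold KL softmax
    have hterm : ∀ j : Fin c, P j * Real.log (P j /
        (Real.exp (z0 j + s * (z1 j - z0 j)) / ∑ k, Real.exp (z0 k + s * (z1 k - z0 k))))
        = P j * Real.log (P j) - P j * (z0 j + s * (z1 j - z0 j)) +
          P j * Real.log (∑ k, Real.exp (z0 k + s * (z1 k - z0 k))) := by
      intro j
      rw [Real.log_div (hPpos j).ne' (div_pos (Real.exp_pos _) hS).ne',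
        Real.log_div (Real.exp_pos _).ne' hS.ne', Real.log_exp]
      ring
    rw [Finset.sum_congr rfl fun j _ => hterm j]
    rw [Finset.sum_add_distrib, Finset.sum_sub_distrib, ← Finset.sum_mul, hPsum, one_mul]
    have : ∑ j, P j * (z0 j + s * (z1 j - z0 j))
        = (∑ j, P j * z0 j) + s * ∑ j, P j * (z1 j - z0 j) := by
      rw [Finset.mul_sum, ← Finset.sum_add_distrib]
      exact Finset.sum_congr rfl fun j _ => by ring
    rw [this]
    ring
  refine ⟨?_, ?_, ?_⟩
  · -- convexity
    have haff : ConvexOn ℝ Set.univ (fun s : ℝ =>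
        ((∑ j, P j * Real.log (P j)) - (∑ j, P j * z0 j)) +
          (- (∑ j, P j * (z1 j - z0 j))) * s) := by
      refine ⟨convex_univ, ?_⟩
      intro x _ y _ p q hp hq hpq
      simp only [smul_eq_mul]
      apply le_of_eq
      linear_combination (((∑ j, P j * Real.log (P j)) - (∑ j, P j * z0 j))) * hpq.symm
    have := haff.add (lse_convexOn hc z0 (fun j => z1 j - z0 j))
    have heq : g = (fun s : ℝ =>
        ((∑ j, P j * Real.log (P j)) - (∑ j, P j * z0 j)) +
          (- (∑ j, P j * (z1 j - z0 j))) * s) +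
        (fun s : ℝ => Real.log (∑ j, Real.exp (z0 j + s * (z1 j - z0 j)))) := by
      funext s
      simpa using hrw s
    rw [heq]
    exact this
  · -- nonnegativity
    intro s
    rw [hg]
    exact KL_nonneg' _ _ hPpos (softmax_pos' hc _) hPsum (softmax_sum' hc _)
  · -- g 1 = 0
    rw [hg]
    show KL P (softmax (fun j => z0 j + 1 * (z1 j - z0 j))) = 0
    have : (fun j => z0 j + 1 * (z1 j - z0 j)) = z1 := by
      funext j; ring
    rw [this, ← hP]
    unfold KL
    apply Finset.sum_eq_zero
    intro j _
    rw [div_self (hPpos j).ne', Real.log_one, mul_zero]
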